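/- arXiv:2312.07367 — 3 statements merged into one kernel-verified Lean document; each statement's English description precedes it below -/
import Mathlib

section
/- Let P₁, P₂, P₃ be three nonzero complex numbers with pairwise distinct values, and define M₃ = P₁ - conj(P₁)·(P₂-P₁)/(conj(P₂)-conj(P₁)), M₁ = P₂ - conj(P₂)·(P₃-P₂)/(conj(P₃)-conj(P₂)), M₂ = P₃ - conj(P₃)·(P₁-P₃)/(conj(P₁)-conj(P₃)) (each Mᵢ is the reflection of 0 about the line through the other two points). Then the multi-ratio satisfies ((P₁-M₃)(P₂-M₁)(P₃-M₂))/((M₃-P₂)(M₁-P₃)(M₂-P₁)) = -1, assuming all denominators are nonzero. -/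
open Complex

/-- Lemma 5.2: multi-ratio of the three intersection points and three reflected
centers equals -1. -/
theorem stmt_0 (P₁ P₂ P₃ M₁ M₂ M₃ : ℂ)
    (h1 : P₁ ≠ 0) (h2 : P₂ ≠ 0) (h3 : P₃ ≠ 0)
    (h12 : P₁ ≠ P₂) (h23 : P₂ ≠ P₃) (h31 : P₃ ≠ P₁)
    (hM₃ : M₃ = P₁ - (starRingEnd ℂ) P₁ * (P₂ - P₁) / ((starRingEnd ℂ) P₂ - (starRingEnd ℂ) P₁))
    (hM₁ : M₁ = P₂ - (starRingEnd ℂ) P₂ * (P₃ - P₂) / ((starRingEnd ℂ) P₃ - (starRingEnd ℂ) P₂))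
    (hM₂ : M₂ = P₃ - (starRingEnd ℂ) P₃ * (P₁ - P₃) / ((starRingEnd ℂ) P₁ - (starRingEnd ℂ) P₃))
    (hd1 : M₃ - P₂ ≠ 0) (hd2 : M₁ - P₃ ≠ 0) (hd3 : M₂ - P₁ ≠ 0) :
    ((P₁ - M₃) * (P₂ - M₁) * (P₃ - M₂)) / ((M₃ - P₂) * (M₁ - P₃) * (M₂ - P₁)) = -1 := by
  have c12 : (starRingEnd ℂ) P₂ - (starRingEnd ℂ) P₁ ≠ 0 := by
    simpa [sub_eq_zero] using fun h => h12 ((starRingEnd ℂ).injective h.symm)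
  have c23 : (starRingEnd ℂ) P₃ - (starRingEnd ℂ) P₂ ≠ 0 := by
    simpa [sub_eq_zero] using fun h => h23 ((starRingEnd ℂ).injective h.symm)
  have c31 : (starRingEnd ℂ) P₁ - (starRingEnd ℂ) P₃ ≠ 0 := by
    simpa [sub_eq_zero] using fun h => h31 ((starRingEnd ℂ).injective h.symm)
  have key : (P₁ - M₃) * (P₂ - M₁) * (P₃ - M₂)
      = -((M₃ - P₂) * (M₁ - P₃) * (M₂ - P₁)) := by
    subst hM₁ hM₂ hM₃
    field_simp
    ring
  rw [key, neg_div, div_self (by simp [hd1, hd2, hd3] : (M₃ - P₂) * (M₁ - P₃) * (M₂ - P₁) ≠ 0)]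
end

section
/- Let L₁, L₂, L₃, L₄ be four pairwise non-parallel lines in ℂ with pairwise intersection points Q_{ij} = Lᵢ ∩ Lⱼ, and assume all six points Q_{ij} are pairwise distinct. Then mr(Q₂₃, Q₃₄, Q₂₄, Q₁₄, Q₁₂, Q₁₃) = -1. -/
/-- The multi-ratio of six complex numbers. -/
noncomputable def mr (a₁ a₂ a₃ a₄ a₅ a₆ : ℂ) : ℂ :=
  ((a₁ - a₂) * (a₃ - a₄) * (a₅ - a₆)) / ((a₂ - a₃) * (a₄ - a₅) * (a₆ - a₁))

/-- Clifford configuration identity in the inverted picture: four pairwise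
non-parallel lines in ℂ with pairwise intersection points Q_{ij} satisfy
mr(Q₂₃,Q₃₄,Q₂₄,Q₁₄,Q₁₂,Q₁₃) = -1. Lines are parametrized as pᵢ + t·dᵢ, t ∈ ℝ. -/
theorem stmt_4 (p d : Fin 4 → ℂ) (Q12 Q13 Q14 Q23 Q24 Q34 : ℂ)
    (hd : ∀ i, d i ≠ 0)
    (hpar : ∀ i j, i ≠ j → ∀ t : ℝ, d i ≠ (t : ℂ) * d j)
    (h12a : ∃ t : ℝ, Q12 = p 0 + (t : ℂ) * d 0) (h12b : ∃ t : ℝ, Q12 = p 1 + (t : ℂ) * d 1)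
    (h13a : ∃ t : ℝ, Q13 = p 0 + (t : ℂ) * d 0) (h13b : ∃ t : ℝ, Q13 = p 2 + (t : ℂ) * d 2)
    (h14a : ∃ t : ℝ, Q14 = p 0 + (t : ℂ) * d 0) (h14b : ∃ t : ℝ, Q14 = p 3 + (t : ℂ) * d 3)
    (h23a : ∃ t : ℝ, Q23 = p 1 + (t : ℂ) * d 1) (h23b : ∃ t : ℝ, Q23 = p 2 + (t : ℂ) * d 2)
    (h24a : ∃ t : ℝ, Q24 = p 1 + (t : ℂ) * d 1) (h24b : ∃ t : ℝ, Q24 = p 3 + (t : ℂ) * d 3)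
    (h34a : ∃ t : ℝ, Q34 = p 2 + (t : ℂ) * d 2) (h34b : ∃ t : ℝ, Q34 = p 3 + (t : ℂ) * d 3)
    (hdist : ∀ i j : Fin 6, i ≠ j →
      ![Q23, Q34, Q24, Q14, Q12, Q13] i ≠ ![Q23, Q34, Q24, Q14, Q12, Q13] j) :
    mr Q23 Q34 Q24 Q14 Q12 Q13 = -1 := by
  obtain ⟨a12, ha12⟩ := h12a
  obtain ⟨a13, ha13⟩ := h13a
  obtain ⟨a14, ha14⟩ := h14a
  obtain ⟨b12, hb12⟩ := h12b
  obtain ⟨b23, hb23⟩ := h23a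
  obtain ⟨b24, hb24⟩ := h24a
  obtain ⟨c13, hc13⟩ := h13b
  obtain ⟨c23, hc23⟩ := h23b
  obtain ⟨c34, hc34⟩ := h34a
  obtain ⟨e14, he14⟩ := h14b
  obtain ⟨e24, he24⟩ := h24b
  obtain ⟨e34, he34⟩ := h34b
  -- real scalars along each line
  set x01 : ℝ := a14 - a13 with hx01def   -- Q14 - Q13 = x01 • d 0
  set x02 : ℝ := a12 - a13 with hx02def   -- Q12 - Q13 = x02 • d 0
  set m : ℝ := b23 - b12 with hmdef       -- Q23 - Q12 = m • d 1
  set n : ℝ := b24 - b12 with hndef       -- Q24 - Q12 = n • d 1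
  set y1 : ℝ := c23 - c13 with hy1def     -- Q23 - Q13 = y1 • d 2
  set y2 : ℝ := c34 - c13 with hy2def     -- Q34 - Q13 = y2 • d 2
  set z1 : ℝ := e24 - e14 with hz1def     -- Q24 - Q14 = z1 • d 3
  set z2 : ℝ := e34 - e14 with hz2def     -- Q34 - Q14 = z2 • d 3
  have eqx01 : Q14 - Q13 = (x01 : ℂ) * d 0 := by rw [ha14, ha13]; push_cast [hx01def]; ring
  have eqx02 : Q12 - Q13 = (x02 : ℂ) * d 0 := by rw [ha12, ha13]; push_cast [hx02def]; ring
  have eqm : Q23 - Q12 = (m : ℂ) * d 1 := by rw [hb23, hb12]; push_cast [hmdef]; ring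
  have eqn : Q24 - Q12 = (n : ℂ) * d 1 := by rw [hb24, hb12]; push_cast [hndef]; ring
  have eqy1 : Q23 - Q13 = (y1 : ℂ) * d 2 := by rw [hc23, hc13]; push_cast [hy1def]; ring
  have eqy2 : Q34 - Q13 = (y2 : ℂ) * d 2 := by rw [hc34, hc13]; push_cast [hy2def]; ring
  have eqz1 : Q24 - Q14 = (z1 : ℂ) * d 3 := by rw [he24, he14]; push_cast [hz1def]; ring
  have eqz2 : Q34 - Q14 = (z2 : ℂ) * d 3 := by rw [he34, he14]; push_cast [hz2def]; ring
  -- nonvanishing of scalars from distinctness of points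
  have key : ∀ (A B : ℂ) (r : ℝ) (i : Fin 4), A - B = (r : ℂ) * d i → A ≠ B → r ≠ 0 := by
    intro A B r i h hne hr
    rw [hr] at h
    push_cast at h
    exact hne (sub_eq_zero.mp (by simpa using h))
  have hQ2313 : Q23 ≠ Q13 := by simpa using hdist 0 5 (by decide)
  have hQ2312 : Q23 ≠ Q12 := by simpa using hdist 0 4 (by decide)
  have hQ3414 : Q34 ≠ Q14 := by simpa using hdist 1 3 (by decide)
  have hQ3424 : Q34 ≠ Q24 := by simpa using hdist 1 2 (by decide)
  have hQ1412 : Q14 ≠ Q12 := by simpa using hdist 3 4 (by decide)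
  have hy1 : y1 ≠ 0 := key _ _ _ _ eqy1 hQ2313
  have hm : m ≠ 0 := key _ _ _ _ eqm hQ2312
  have eqz21 : Q34 - Q24 = ((z2 - z1 : ℝ) : ℂ) * d 3 := by
    push_cast; rw [sub_mul]; rw [← eqz1, ← eqz2]; ring
  have eqx0102 : Q14 - Q12 = ((x01 - x02 : ℝ) : ℂ) * d 0 := by
    push_cast; rw [sub_mul]; rw [← eqx01, ← eqx02]; ring
  have hz21 : (z2 - z1 : ℝ) ≠ 0 := key _ _ _ _ eqz21 hQ3424
  have hx0102 : (x01 - x02 : ℝ) ≠ 0 := key _ _ _ _ eqx0102 hQ1412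
  -- ℝ-linear independence of d 0 and d 2
  have hindep : ∀ a b : ℝ, (a : ℂ) * d 0 + (b : ℂ) * d 2 = 0 → a = 0 ∧ b = 0 := by
    intro a b hab
    rcases eq_or_ne b 0 with hb | hb
    · subst hb
      simp only [Complex.ofReal_zero, zero_mul, add_zero, mul_eq_zero] at hab
      rcases hab with h | h
      · exact ⟨by exact_mod_cast h, rfl⟩
      · exact absurd h (hd 0)
    · exfalso
      apply hpar 2 0 (by decide) (-a / b)
      have hb' : (b : ℂ) ≠ 0 := by exact_mod_cast hb
      push_cast
      rw [div_mul_eq_mul_div, eq_div_iff hb']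
      linear_combination hab
  -- relation z2·d3 = y2·d2 − x01·d0
  have hd3 : (z2 : ℂ) * d 3 = (y2 : ℂ) * d 2 - (x01 : ℂ) * d 0 := by
    linear_combination eqy2 - eqx01 - eqz2
  -- collinearity of Q12, Q23, Q24 on line 2
  have hcol : (m : ℂ) * (Q24 - Q12) = (n : ℂ) * (Q23 - Q12) := by
    rw [eqm, eqn]; ring
  -- extract the two real relations
  have hkey : ((m * (z2 * (x01 - x02) - z1 * x01) + n * z2 * x02 : ℝ) : ℂ) * d 0 +
      ((m * z1 * y2 - n * z2 * y1 : ℝ) : ℂ) * d 2 = 0 := by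
    push_cast
    linear_combination (z2 : ℂ) * hcol - (m : ℂ) * (z2 : ℂ) * eqz1
      - (m : ℂ) * (z2 : ℂ) * eqx01 + (m : ℂ) * (z2 : ℂ) * eqx02
      + (n : ℂ) * (z2 : ℂ) * eqy1 - (n : ℂ) * (z2 : ℂ) * eqx02
      - (m : ℂ) * (z1 : ℂ) * hd3
  obtain ⟨R1, R2⟩ := hindep _ _ hkey
  -- the Menelaus identity on the real scalars
  have hT : (y1 - y2) * z1 * x02 - y1 * (z2 - z1) * (x01 - x02) = 0 := by
    have hme : m * ((y1 - y2) * z1 * x02 - y1 * (z2 - z1) * (x01 - x02)) = 0 := by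
      linear_combination (-y1) * R1 - x02 * R2
    rcases mul_eq_zero.mp hme with h | h
    · exact absurd h hm
    · exact h
  have hTc : ((y1 : ℂ) - y2) * z1 * x02 - (y1 : ℂ) * (z2 - z1) * (x01 - x02) = 0 := by
    have := congrArg (fun r : ℝ => (r : ℂ)) hT
    push_cast at this
    linear_combination this
  -- rewrite the multi-ratio
  have e1 : Q23 - Q34 = ((y1 - y2 : ℝ) : ℂ) * d 2 := by
    push_cast; rw [sub_mul]; rw [← eqy1, ← eqy2]; ring
  have e6 : Q13 - Q23 = ((-y1 : ℝ) : ℂ) * d 2 := by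
    push_cast; rw [neg_mul]; rw [← eqy1]; ring
  rw [mr, e1, eqz1, eqx02, eqz21, eqx0102, e6]
  rw [div_eq_iff]
  · push_cast
    linear_combination (d 0 * d 2 * d 3) * hTc
  · push_cast
    apply mul_ne_zero
    apply mul_ne_zero
    · exact mul_ne_zero (by exact_mod_cast hz21) (hd 3)
    · exact mul_ne_zero (by exact_mod_cast hx0102) (hd 0)
    · exact mul_ne_zero (by simpa using hy1) (hd 2)
end

section
/- Three-fold reflection closure (Miquel's theorem, algebraic form): let P₁, P₂, P₃ ∈ ℂ be nonzero and pairwise distinct with pairwise distinct conjugate ratios, and let λ₁₂, λ₂₃, λ₃₁ ∈ ℝ. For i ∈ {1,2,3} (indices mod 3) suppose the collinearity condition ((conj(Pᵢ) - conj(P_{i+1}))(P_{i-1} - Pᵢ))/((Pᵢ - P_{i+1})(conj(P_{i-1}) - conj(Pᵢ))) = ((conj(Pᵢ) - λ_{i,i+1}conj(P_{i+1}))(P_{i-1} - λ_{i-1,i}Pᵢ))/((Pᵢ - λ_{i,i+1}P_{i+1})(conj(P_{i-1}) - λ_{i-1,i}conj(Pᵢ))) holds for i = 1 and i = 2 (all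 denominators nonzero). Then it also holds for i = 3. (Equivalently, the product of the three instances of this equation is the trivial identity 1 = 1.) -/
/-!
Both sides of the linearity condition at vertex `i` have the shape `Aᵢ Bᵢ₋₁ / (Bᵢ Aᵢ₋₁)`, with
`Aᵢ = conj Pᵢ - λ conj Pᵢ₊₁` and `Bᵢ = Pᵢ - λ Pᵢ₊₁` (`λ = 1` on the left-hand side). The product of
the three instances therefore telescopes to `1 = 1` on both sides, so the instances at `i = 1, 2`
determine the one at `i = 3`.
-/

/-- The collinearity (linearity) condition, Equation (85) of the paper, for the
triple (Pprev, Pcur, Pnext) with real parameters lprev, lcur. -/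
def lincond (Pprev Pcur Pnext : ℂ) (lprev lcur : ℝ) : Prop :=
  (((starRingEnd ℂ) Pcur - (starRingEnd ℂ) Pnext) * (Pprev - Pcur)) /
      ((Pcur - Pnext) * ((starRingEnd ℂ) Pprev - (starRingEnd ℂ) Pcur)) =
    (((starRingEnd ℂ) Pcur - (lcur : ℂ) * (starRingEnd ℂ) Pnext) *
        (Pprev - (lprev : ℂ) * Pcur)) /
      ((Pcur - (lcur : ℂ) * Pnext) *
        ((starRingEnd ℂ) Pprev - (lprev : ℂ) * (starRingEnd ℂ) Pcur))

theorem cyclic_ratio_prod_eq_one {K : Type*} [Field K] {A₁ A₂ A₃ B₁ B₂ B₃ : K}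
    (hA₁ : A₁ ≠ 0) (hA₂ : A₂ ≠ 0) (hA₃ : A₃ ≠ 0) (hB₁ : B₁ ≠ 0) (hB₂ : B₂ ≠ 0) (hB₃ : B₃ ≠ 0) :
    A₁ * B₃ / (B₁ * A₃) * (A₂ * B₁ / (B₂ * A₁)) * (A₃ * B₂ / (B₃ * A₂)) = 1 := by
  field_simp

theorem stmt_17_general (P₁ P₂ P₃ : ℂ) (l₁₂ l₂₃ l₃₁ : ℝ)
    (h12 : P₁ ≠ P₂) (h23 : P₂ ≠ P₃) (h31 : P₃ ≠ P₁)
    (hd1 : P₁ - (l₁₂ : ℂ) * P₂ ≠ 0)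
    (hd2 : P₂ - (l₂₃ : ℂ) * P₃ ≠ 0)
    (hd3 : P₃ - (l₃₁ : ℂ) * P₁ ≠ 0)
    (hd1' : (starRingEnd ℂ) P₃ - (l₃₁ : ℂ) * (starRingEnd ℂ) P₁ ≠ 0)
    (hd2' : (starRingEnd ℂ) P₁ - (l₁₂ : ℂ) * (starRingEnd ℂ) P₂ ≠ 0)
    (hd3' : (starRingEnd ℂ) P₂ - (l₂₃ : ℂ) * (starRingEnd ℂ) P₃ ≠ 0)
    (hE1 : lincond P₃ P₁ P₂ l₃₁ l₁₂)
    (hE2 : lincond P₁ P₂ P₃ l₁₂ l₂₃) :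
    lincond P₂ P₃ P₁ l₂₃ l₃₁ := by
  unfold lincond at hE1 hE2 ⊢
  have hconj {z w : ℂ} (h : z ≠ w) : (starRingEnd ℂ) z - (starRingEnd ℂ) w ≠ 0 :=
    sub_ne_zero.2 ((starRingEnd ℂ).injective.ne h)
  have hL := cyclic_ratio_prod_eq_one (hconj h12) (hconj h23) (hconj h31)
    (sub_ne_zero.2 h12) (sub_ne_zero.2 h23) (sub_ne_zero.2 h31)
  have hR := cyclic_ratio_prod_eq_one hd2' hd3' hd1' hd1 hd2 hd3
  rw [hE1, hE2] at hL
  exact (eq_inv_of_mul_eq_one_right hL).trans (eq_inv_of_mul_eq_one_right hR).symm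

/-- Three-fold reflection closure (algebraic Miquel theorem): the collinearity
conditions for i = 1 and i = 2 imply the one for i = 3. -/
theorem stmt_17 (P₁ P₂ P₃ : ℂ) (l₁₂ l₂₃ l₃₁ : ℝ)
    (h1 : P₁ ≠ 0) (h2 : P₂ ≠ 0) (h3 : P₃ ≠ 0)
    (h12 : P₁ ≠ P₂) (h23 : P₂ ≠ P₃) (h31 : P₃ ≠ P₁)
    (hcr12 : (starRingEnd ℂ) P₁ / P₁ ≠ (starRingEnd ℂ) P₂ / P₂)
    (hcr23 : (starRingEnd ℂ) P₂ / P₂ ≠ (starRingEnd ℂ) P₃ / P₃)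
    (hcr31 : (starRingEnd ℂ) P₃ / P₃ ≠ (starRingEnd ℂ) P₁ / P₁)
    (hd1 : P₁ - (l₁₂ : ℂ) * P₂ ≠ 0)
    (hd2 : P₂ - (l₂₃ : ℂ) * P₃ ≠ 0)
    (hd3 : P₃ - (l₃₁ : ℂ) * P₁ ≠ 0)
    (hd1' : (starRingEnd ℂ) P₃ - (l₃₁ : ℂ) * (starRingEnd ℂ) P₁ ≠ 0)
    (hd2' : (starRingEnd ℂ) P₁ - (l₁₂ : ℂ) * (starRingEnd ℂ) P₂ ≠ 0)
    (hd3' : (starRingEnd ℂ) P₂ - (l₂₃ : ℂ) * (starRingEnd ℂ) P₃ ≠ 0)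
    (hE1 : lincond P₃ P₁ P₂ l₃₁ l₁₂)
    (hE2 : lincond P₁ P₂ P₃ l₁₂ l₂₃) :
    lincond P₂ P₃ P₁ l₂₃ l₃₁ :=
  stmt_17_general P₁ P₂ P₃ l₁₂ l₂₃ l₃₁ h12 h23 h31 hd1 hd2 hd3 hd1' hd2' hd3' hE1 hE2
end
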